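/- arXiv:1212.6108 — 7 statements merged into one kernel-verified Lean document; each statement's English description precedes it below -/
import Mathlib

section
/- The Cauchy determinant identity: for complex numbers x₁,...,xₙ, y₁,...,yₙ with all 1 - xᵢyⱼ nonzero, det((1/(1-xᵢyⱼ))ᵢⱼ) = ∏_{1≤i<j≤n}(xᵢ-xⱼ)(yᵢ-yⱼ) / ∏_{i,j}(1-xᵢyⱼ). -/
/-!
Clearing the denominators of row `i` turns the matrix into `B i j = ∏_{k ≠ j} (1 - x i * y k)`,
the homogenized nodal polynomial `∏_{k ≠ j} (X - y k)` evaluated at `(1, x i)`. Hence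
`B = V' * N` with `V'` a projective Vandermonde matrix in `x` and `N` the coefficient matrix of
the nodal polynomials. Evaluating the same polynomials at `(y i, 1)` instead gives
`V(y) * N = diagonal (∏_{k ≠ j} (y j - y k))`, which determines `det N` when the `y j` are
distinct; otherwise two columns of the matrix coincide and both sides vanish.
-/

open Finset Polynomial Matrix

namespace Polynomial

variable {R : Type*} [CommSemiring R]

theorem eval_homogenize_eq_sum (p : R[X]) (n : ℕ) (a b : R) :
    MvPolynomial.eval ![a, b] (p.homogenize n) =
      ∑ m ∈ range (n + 1), p.coeff m * a ^ m * b ^ (n - m) := by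
  simp [homogenize, Finset.Nat.sum_antidiagonal_eq_sum_range_succ_mk, MvPolynomial.eval_monomial,
    Finsupp.prod_fintype, mul_assoc]

end Polynomial

namespace Lagrange

variable {R ι : Type*} [CommRing R]

theorem eval_homogenize_nodal (s : Finset ι) (v : ι → R) (a b : R) :
    MvPolynomial.eval ![a, b] ((nodal s v).homogenize #s) = ∏ i ∈ s, (a - v i * b) := by
  have hprod := homogenize_finsetProd (s := s) (p := fun i => X - C (v i)) (n := fun _ => 1)
    fun i _ => natDegree_X_sub_C_le _
  rw [sum_const, smul_eq_mul, mul_one] at hprod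
  simp [nodal, hprod]

end Lagrange

namespace Matrix

variable {R : Type*} [CommRing R]

noncomputable def nodalCoeffMatrix {n : ℕ} (v : Fin n → R) : Matrix (Fin n) (Fin n) R :=
  .of fun m j => (Lagrange.nodal {j}ᶜ v).coeff m

theorem projVandermonde_mul_nodalCoeffMatrix {n : ℕ} (a b v : Fin (n + 1) → R) :
    projVandermonde a b * nodalCoeffMatrix v =
      .of fun i j => ∏ k ∈ {j}ᶜ, (a i - v k * b i) := by
  ext i j
  have hcard : #({j}ᶜ : Finset (Fin (n + 1))) = n := by simp [card_compl]
  rw [of_apply, ← Lagrange.eval_homogenize_nodal, hcard, eval_homogenize_eq_sum,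
    ← Fin.sum_univ_eq_sum_range (fun m => _ * a i ^ m * b i ^ (n - m)), mul_apply]
  refine sum_congr rfl fun m _ => ?_
  rw [projVandermonde_apply, nodalCoeffMatrix, of_apply, Fin.val_rev, Nat.add_sub_add_right]
  ring

theorem det_nodalCoeffMatrix [IsDomain R] {n : ℕ} {v : Fin (n + 1) → R}
    (hv : Function.Injective v) :
    (nodalCoeffMatrix v).det = ∏ i, ∏ j ∈ Ioi i, (v i - v j) := by
  have hdiag : projVandermonde v 1 * nodalCoeffMatrix v =
      diagonal fun j => ∏ k ∈ {j}ᶜ, (v j - v k) := by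
    rw [projVandermonde_mul_nodalCoeffMatrix]
    ext i j
    rcases eq_or_ne i j with rfl | hij
    · simp
    · rw [diagonal_apply_ne _ hij, of_apply]
      exact prod_eq_zero (mem_compl.2 (notMem_singleton.2 hij)) (by simp)
  have hV : (projVandermonde v 1).det ≠ 0 := by
    rw [← vandermonde_eq_projVandermonde]
    exact det_vandermonde_ne_zero_iff.2 hv
  apply mul_left_cancel₀ hV
  rw [← det_mul, hdiag, det_diagonal, ← prod_prod_Ioi_mul_eq_prod_prod_off_diag,
    det_projVandermonde, ← prod_mul_distrib]
  refine prod_congr rfl fun i _ => ?_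
  rw [← prod_mul_distrib]
  exact prod_congr rfl fun j _ => by simp [mul_comm]

theorem det_of_inv_one_sub_mul {K : Type*} [Field K] {n : ℕ} (x y : Fin n → K)
    (h : ∀ i j, 1 - x i * y j ≠ 0) :
    (of fun i j => (1 - x i * y j)⁻¹).det =
      (∏ i, ∏ j ∈ Ioi i, (x i - x j) * (y i - y j)) / ∏ i, ∏ j, (1 - x i * y j) := by
  obtain _ | n := n
  · simp
  by_cases hy : Function.Injective y
  · have hfactor : (of fun i j => (1 - x i * y j)⁻¹) =
        diagonal (fun i => (∏ k, (1 - x i * y k))⁻¹) *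
          (projVandermonde 1 x * nodalCoeffMatrix y) := by
      ext i j
      have hrest : ∏ k ∈ {j}ᶜ, ((1 : Fin (n + 1) → K) i - y k * x i) =
          ∏ k ∈ {j}ᶜ, (1 - x i * y k) := by
        simp [mul_comm]
      rw [projVandermonde_mul_nodalCoeffMatrix, diagonal_mul, of_apply, of_apply, hrest,
        Fintype.prod_eq_mul_prod_compl j, mul_inv, mul_assoc,
        inv_mul_cancel₀ (prod_ne_zero_iff.2 fun k _ => h i k), mul_one]
    rw [hfactor, det_mul, det_mul, det_diagonal, det_projVandermonde, det_nodalCoeffMatrix hy,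
      prod_inv_distrib, ← prod_mul_distrib]
    simp only [Pi.one_apply, one_mul, ← prod_mul_distrib]
    ring
  · obtain ⟨a, b, hab, hne⟩ := Function.not_injective_iff.1 hy
    have hdet : (of fun i j => (1 - x i * y j)⁻¹).det = 0 :=
      det_zero_of_column_eq hne fun i => by simp [hab]
    obtain ⟨i, j, hij, hyij⟩ : ∃ i j, i < j ∧ y i = y j := by
      rcases hne.lt_or_gt with hlt | hlt
      · exact ⟨a, b, hlt, hab⟩
      · exact ⟨b, a, hlt, hab.symm⟩
    rw [hdet, prod_eq_zero (mem_univ i) (prod_eq_zero (mem_Ioi.2 hij) (by simp [hyij])), zero_div]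

end Matrix

/-- Cauchy's determinant identity. -/
theorem cauchy_determinant (n : ℕ) (x y : Fin n → ℂ)
    (h : ∀ i j, 1 - x i * y j ≠ 0) :
    Matrix.det (Matrix.of fun i j => (1 - x i * y j)⁻¹)
      = (∏ i, ∏ j, if i < j then (x i - x j) * (y i - y j) else 1)
        / ∏ i, ∏ j, (1 - x i * y j) := by
  rw [det_of_inv_one_sub_mul x y h]
  congr 1
  refine prod_congr rfl fun i _ => ?_
  rw [← prod_filter, filter_lt_eq_Ioi]
end

section
/- For distinct real numbers t₁,...,tₙ in (-1,1), with qᵢ(t) = (1-tᵢ²)⁻¹ ∏_{k≠i} (tᵢ-t_k)/(1-tᵢt_k), one has q₁(t)⋯qₙ(t) = (-1)^{n(n-1)/2} det((1/(1-tᵢtⱼ))ᵢⱼ). -/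
/-!
The matrix `(1 / (1 - tᵢtⱼ))` is of Cauchy type: one Gaussian elimination step peels off its first
row and column and reduces it to the same matrix in `n - 1` variables, which gives
`det = ∏_{i<j} (tⱼ - tᵢ)² / ∏_{i,j} (1 - tᵢtⱼ)`. On the other side,
`∏ᵢ qᵢ = ∏_{i≠k} (tᵢ - t_k) / ∏_{i,k} (1 - tᵢt_k)`, and pairing `(i, k)` with `(k, i)` turns the
numerator into `(-1)^(n(n-1)/2) ∏_{i<j} (tⱼ - tᵢ)²`.
-/

open Finset Matrix

theorem Fin.sum_card_Ioi (n : ℕ) : ∑ i : Fin n, #(Ioi i) = n * (n - 1) / 2 := by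
  simp_rw [Fin.card_Ioi]
  rw [Fin.sum_univ_eq_sum_range (fun k => n - 1 - k), ← sum_range_reflect, ← sum_range_id]
  refine sum_congr rfl fun k hk => ?_
  have := mem_range.mp hk
  omega

theorem Fin.prod_prod_erase_sub {R : Type*} [CommRing R] {n : ℕ} (f : Fin n → R) :
    ∏ i, ∏ k ∈ univ.erase i, (f i - f k) =
      (-1) ^ (n * (n - 1) / 2) * ∏ i, ∏ j ∈ Ioi i, (f j - f i) ^ 2 := by
  have h := prod_prod_Ioi_mul_eq_prod_prod_off_diag fun j i : Fin n => f i - f j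
  simp only [compl_singleton] at h
  rw [← h, ← Fin.sum_card_Ioi, ← prod_pow_eq_pow_sum, ← prod_mul_distrib]
  refine prod_congr rfl fun i _ => ?_
  rw [← Finset.prod_const, ← prod_mul_distrib]
  exact prod_congr rfl fun j _ => by ring

namespace Matrix

variable {K : Type*} [Field K]

theorem det_inv_one_sub_mul_succ {n : ℕ} (a b : Fin (n + 1) → K)
    (h : ∀ i j, 1 - a i * b j ≠ 0) :
    det (of fun i j => (1 - a i * b j)⁻¹) =
      (1 - a 0 * b 0)⁻¹ * (∏ i : Fin n, (a i.succ - a 0) * (1 - a i.succ * b 0)⁻¹) *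
        (∏ j : Fin n, (b j.succ - b 0) * (1 - a 0 * b j.succ)⁻¹) *
        det (of fun i j : Fin n => (1 - a i.succ * b j.succ)⁻¹) := by
  set u : Fin (n + 1) → K := fun i => (a i - a 0) * (1 - a i * b 0)⁻¹
  set v : Fin (n + 1) → K := fun j => (b j - b 0) * (1 - a 0 * b j)⁻¹
  -- Clearing column 0 leaves the Schur complement, because
  -- `(1 - aᵢb₀)(1 - a₀bⱼ) - (1 - a₀b₀)(1 - aᵢbⱼ) = (aᵢ - a₀)(bⱼ - b₀)`.
  have row_op : det (of fun i j => (1 - a i * b j)⁻¹) = det (of fun i j =>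
      if i = 0 then (1 - a 0 * b j)⁻¹ else u i * (v j * (1 - a i * b j)⁻¹)) := by
    refine det_eq_of_forall_row_eq_smul_add_const
      (fun i => if i = 0 then 0 else (1 - a 0 * b 0) * (1 - a i * b 0)⁻¹) 0 (by simp) fun i j => ?_
    rcases eq_or_ne i 0 with rfl | hi
    · simp
    · have := h i j; have := h i 0; have := h 0 j
      simp only [of_apply, if_neg hi, ↓reduceIte, u, v]
      have : 1 - b j * a 0 ≠ 0 := by rwa [mul_comm]
      field_simp
      ring
  have schur : det ((of fun i j : Fin (n + 1) =>
      if i = 0 then (1 - a 0 * b j)⁻¹ else u i * (v j * (1 - a i * b j)⁻¹)).submatrix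
        Fin.succ Fin.succ) = (∏ i : Fin n, u i.succ) *
          ((∏ j : Fin n, v j.succ) * det (of fun i j : Fin n => (1 - a i.succ * b j.succ)⁻¹)) := by
    rw [← det_mul_row, ← det_mul_column]
    congr 1
  rw [row_op, det_succ_column_zero, Fin.sum_univ_succ, sum_eq_zero fun i _ => ?_,
    Fin.succAbove_zero, schur]
  · simp only [of_apply, ↓reduceIte, Fin.val_zero, pow_zero, one_mul, add_zero, u, v]
    ring
  · simp [Fin.succ_ne_zero, v]

theorem det_inv_one_sub_mul {n : ℕ} (a b : Fin n → K) (h : ∀ i j, 1 - a i * b j ≠ 0) :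
    det (of fun i j => (1 - a i * b j)⁻¹) =
      (∏ i, ∏ j ∈ Ioi i, (a j - a i) * (b j - b i)) * ∏ i, ∏ j, (1 - a i * b j)⁻¹ := by
  induction n with
  | zero => simp
  | succ n ih =>
    rw [det_inv_one_sub_mul_succ a b h, ih _ _ fun i j => h i.succ j.succ]
    simp only [Fin.prod_univ_succ, Fin.prod_Ioi_zero, Fin.prod_Ioi_succ, prod_mul_distrib]
    ring

end Matrix

theorem product_of_q_general (n : ℕ) (t : Fin n → ℝ)
    (ht : ∀ i, t i ∈ Set.Ioo (-1 : ℝ) 1) :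
    (∏ i, ((1 - t i ^ 2)⁻¹ * ∏ k ∈ Finset.univ.erase i, (t i - t k) / (1 - t i * t k)))
      = (-1 : ℝ) ^ (n * (n - 1) / 2)
        * Matrix.det (Matrix.of fun i j => (1 - t i * t j)⁻¹) := by
  have h : ∀ i j, 1 - t i * t j ≠ 0 := fun i j => by
    have hij : |t i * t j| < 1 := by
      rw [abs_mul]
      exact mul_lt_one_of_nonneg_of_lt_one_left (abs_nonneg _) (abs_lt.2 (ht i))
        (abs_lt.2 (ht j)).le
    exact sub_ne_zero.2 (lt_of_le_of_lt (le_abs_self _) hij).ne'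
  have hq : ∀ i, (1 - t i ^ 2)⁻¹ * ∏ k ∈ univ.erase i, (t i - t k) / (1 - t i * t k) =
      (∏ k ∈ univ.erase i, (t i - t k)) * ∏ k, (1 - t i * t k)⁻¹ := fun i => by
    rw [← mul_prod_erase univ _ (mem_univ i), prod_div_distrib, sq, div_eq_mul_inv,
      prod_inv_distrib]
    ring
  rw [prod_congr rfl fun i _ => hq i, prod_mul_distrib, Fin.prod_prod_erase_sub,
    det_inv_one_sub_mul t t h]
  simp_rw [sq]
  ring

/-- ∏ᵢ qᵢ(t) = (-1)^{n(n-1)/2} det((1/(1-tᵢtⱼ))), where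
qᵢ(t) = (1-tᵢ²)⁻¹ ∏_{k≠i} (tᵢ-t_k)/(1-tᵢt_k), for distinct t₁,…,tₙ ∈ (-1,1). -/
theorem product_of_q (n : ℕ) (t : Fin n → ℝ)
    (ht : ∀ i, t i ∈ Set.Ioo (-1 : ℝ) 1) (hdist : Function.Injective t) :
    (∏ i, ((1 - t i ^ 2)⁻¹ * ∏ k ∈ Finset.univ.erase i, (t i - t k) / (1 - t i * t k)))
      = (-1 : ℝ) ^ (n * (n - 1) / 2)
        * Matrix.det (Matrix.of fun i j => (1 - t i * t j)⁻¹) :=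
  product_of_q_general n t ht
end

section
/- Schur's Pfaffian identity: for real numbers x₁,...,x_{2n} in (-1,1), the Pfaffian of the 2n×2n skew-symmetric matrix with (i,j)-entry (xᵢ-xⱼ)/(1-xᵢxⱼ) equals ∏_{1≤i<j≤2n} (xᵢ-xⱼ)/(1-xᵢxⱼ). -/
open Finset

/-- The index `2*i + b` in `Fin (2*n)`, for `i : Fin n`, `b : Fin 2`. -/
def pairIdx {n : ℕ} (i : Fin n) (b : Fin 2) : Fin (2 * n) :=
  ⟨2 * i.1 + b.1, by have hi := i.2; have hb := b.2; omega⟩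

/-- The Pfaffian of a `2n × 2n` matrix: the signed sum over perfect matchings,
realized as the sum over permutations η with η(2i-1) < η(2i) and
η(1) < η(3) < ⋯ < η(2n-1). -/
def pfaffian {R : Type*} [CommRing R] {n : ℕ}
    (B : Matrix (Fin (2 * n)) (Fin (2 * n)) R) : R :=
  ∑ η : Equiv.Perm (Fin (2 * n)),
    if (∀ i : Fin n, η (pairIdx i 0) < η (pairIdx i 1)) ∧
        (∀ i j : Fin n, i < j → η (pairIdx i 0) < η (pairIdx j 0)) then
      ((Equiv.Perm.sign η : ℤ) : R) * ∏ i : Fin n, B (η (pairIdx i 0)) (η (pairIdx i 1))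
    else 0

/-!
Expanding the Pfaffian along its first row and applying induction to the minors, the identity
for `f a b = (a - b) / (1 - a * b)` reduces to the partial-fraction identity
`∑ j, f y (z j) / ∏ k ≠ j, f (z j) (z k) = ∏ k, f y (z k)` for an odd number `N` of distinct
points `z`. With `y = t⁻¹` it follows by evaluating at `t` the polynomial identity
`∏ k, (1 - z k X) = (1 - X²) G + X ∏ k, (X - z k)`, where `G` interpolates
`∏ k ≠ j, (1 - z j z k)` at the nodes `z j`: both sides have degree `≤ N + 1` and agree at the
`N + 2` points `z j`, `1`, `-1` (the value at `-1` uses that `N` is odd), and comparing the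
coefficients of `X ^ (N + 1)` shows that the interpolation weights sum to `1`.

This proves the identity for distinct nonzero `x i`; the general case follows by perturbing `x`
to `x + ε (1, 2, …, 2n)` and letting `ε → 0`.
-/

namespace Equiv.Perm

variable {n : ℕ}

def liftZero (σ : Perm (Fin n)) : Perm (Fin (n + 1)) := decomposeFin.symm (0, σ)

@[simp] lemma liftZero_zero (σ : Perm (Fin n)) : liftZero σ 0 = 0 :=
  decomposeFin_symm_apply_zero _ _

@[simp] lemma liftZero_succ (σ : Perm (Fin n)) (i : Fin n) : liftZero σ i.succ = (σ i).succ := by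
  simp [liftZero, decomposeFin_symm_apply_succ]

@[simp] lemma sign_liftZero (σ : Perm (Fin n)) : sign (liftZero σ) = sign σ := by
  simp [liftZero, decomposeFin.symm_sign]

lemma liftZero_injective : Function.Injective (liftZero (n := n)) := fun _ _ h =>
  congrArg Prod.snd (decomposeFin.symm.injective h)

lemma exists_liftZero_eq {σ : Perm (Fin (n + 1))} (h : σ 0 = 0) : ∃ τ, liftZero τ = σ := by
  obtain ⟨⟨p, τ⟩, hpτ⟩ := decomposeFin.symm.surjective σ
  obtain rfl : p = 0 := by rw [← h, ← hpτ, decomposeFin_symm_apply_zero]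
  exact ⟨τ, hpτ⟩

def insertPair (b : Fin (n + 1)) (σ : Perm (Fin n)) : Perm (Fin (n + 2)) :=
  liftZero (b.cycleRange⁻¹ * liftZero σ)

variable (b : Fin (n + 1)) (σ : Perm (Fin n))

@[simp] lemma insertPair_zero : insertPair b σ 0 = 0 := liftZero_zero _

@[simp] lemma insertPair_one : insertPair b σ 1 = b.succ := by
  rw [insertPair, ← Fin.succ_zero_eq_one, liftZero_succ, mul_apply, liftZero_zero, inv_def,
    Fin.succ_inj, symm_apply_eq, Fin.cycleRange_self]

@[simp] lemma insertPair_succ_succ (i : Fin n) :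
    insertPair b σ i.succ.succ = (b.succAbove (σ i)).succ := by
  rw [insertPair, liftZero_succ, mul_apply, liftZero_succ, inv_def, Fin.succ_inj, symm_apply_eq,
    Fin.cycleRange_succAbove]

lemma sign_insertPair : sign (insertPair b σ) = (-1) ^ (b : ℕ) * sign σ := by
  simp [insertPair, Fin.sign_cycleRange]

variable {b σ}

lemma insertPair_inj {b' : Fin (n + 1)} {σ' : Perm (Fin n)}
    (h : insertPair b σ = insertPair b' σ') : b = b' ∧ σ = σ' := by
  obtain rfl : b = b' := Fin.succ_injective _ <| by rw [← insertPair_one b σ, h, insertPair_one]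
  exact ⟨rfl, liftZero_injective (mul_left_cancel (liftZero_injective h))⟩

lemma exists_insertPair_eq {η : Perm (Fin (n + 2))} (h : η 0 = 0) :
    ∃ b τ, insertPair b τ = η := by
  obtain ⟨ρ, rfl⟩ := exists_liftZero_eq h
  obtain ⟨τ, hτ⟩ := exists_liftZero_eq (σ := (ρ 0).cycleRange * ρ)
    (by simp [Fin.cycleRange_self])
  exact ⟨ρ 0, τ, by rw [insertPair, hτ, inv_mul_cancel_left]⟩

end Equiv.Perm

open Equiv Equiv.Perm

def IsSortedPairing {n : ℕ} (η : Perm (Fin (2 * n))) : Prop :=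
  (∀ i : Fin n, η (pairIdx i 0) < η (pairIdx i 1)) ∧
    ∀ i j : Fin n, i < j → η (pairIdx i 0) < η (pairIdx j 0)

instance {n : ℕ} : DecidablePred (IsSortedPairing (n := n)) := fun _ => by
  unfold IsSortedPairing; infer_instance

lemma pfaffian_eq_sum_isSortedPairing {R : Type*} [CommRing R] {n : ℕ}
    (B : Matrix (Fin (2 * n)) (Fin (2 * n)) R) :
    pfaffian B = ∑ η : Perm (Fin (2 * n)), if IsSortedPairing η then
      (sign η : R) * ∏ i : Fin n, B (η (pairIdx i 0)) (η (pairIdx i 1)) else 0 := by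
  unfold pfaffian IsSortedPairing
  congr!

lemma continuous_pfaffian {R : Type*} [CommRing R] [TopologicalSpace R] [IsTopologicalRing R]
    {n : ℕ} : Continuous (pfaffian : Matrix (Fin (2 * n)) (Fin (2 * n)) R → R) := by
  unfold pfaffian
  refine continuous_finsetSum _ fun η _ => ?_
  split_ifs
  · fun_prop
  · exact continuous_const

lemma exists_pairIdx_eq {n : ℕ} (k : Fin (2 * n)) : ∃ i c, pairIdx i c = k :=
  ⟨⟨k / 2, by omega⟩, ⟨k % 2, by omega⟩, Fin.ext (by simp [pairIdx]; omega)⟩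

section Expansion

variable {m : ℕ}

lemma pairIdx_zero_zero : pairIdx (0 : Fin (m + 1)) 0 = 0 := rfl

lemma pairIdx_zero_one : pairIdx (0 : Fin (m + 1)) 1 = 1 := by
  ext; simp [pairIdx]

lemma pairIdx_succ (i : Fin m) (c : Fin 2) : pairIdx i.succ c = (pairIdx i c).succ.succ := by
  ext; simp [pairIdx]; ring

lemma IsSortedPairing.apply_zero {η : Perm (Fin (2 * (m + 1)))} (h : IsSortedPairing η) :
    η 0 = 0 := by
  have hmin : ∀ k, η 0 ≤ η k := by
    intro k
    obtain ⟨i, c, rfl⟩ := exists_pairIdx_eq k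
    have h0 : η 0 ≤ η (pairIdx i 0) := by
      rcases (Fin.zero_le i).eq_or_lt with rfl | hi
      · rfl
      · exact (h.2 0 i hi).le
    fin_cases c
    · exact h0
    · exact h0.trans (h.1 i).le
  simpa using hmin (η.symm 0)

lemma isSortedPairing_insertPair_iff (b : Fin (2 * m + 1)) (σ : Perm (Fin (2 * m))) :
    IsSortedPairing (n := m + 1) (insertPair b σ) ↔ IsSortedPairing σ := by
  have hmono : StrictMono fun k => (b.succAbove k).succ :=
    Fin.strictMono_succ.comp (Fin.strictMono_succAbove b)
  simp [IsSortedPairing, Fin.forall_fin_succ, pairIdx_zero_zero, pairIdx_zero_one, pairIdx_succ,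
    hmono.lt_iff_lt]

lemma sum_perm_eq_sum_insertPair {M : Type*} [AddCommMonoid M] (g : Perm (Fin (2 * (m + 1))) → M)
    (hg : ∀ η, ¬ IsSortedPairing η → g η = 0) :
    ∑ η, g η = ∑ b : Fin (2 * m + 1), ∑ σ : Perm (Fin (2 * m)), g (insertPair b σ) := by
  rw [← Fintype.sum_prod_type']
  refine (Fintype.sum_of_injective (fun p : Fin (2 * m + 1) × Perm (Fin (2 * m)) =>
      (insertPair p.1 p.2 : Perm (Fin (2 * (m + 1)))))
    (fun _ _ h => Prod.ext_iff.mpr (insertPair_inj h)) _ g (fun η hη => ?_) fun _ => rfl).symm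
  by_contra hne
  obtain ⟨b, σ, rfl⟩ :=
    exists_insertPair_eq (n := 2 * m) (not_imp_comm.mp (hg η) hne).apply_zero
  exact hη ⟨(b, σ), rfl⟩

theorem pfaffian_succ {R : Type*} [CommRing R]
    (B : Matrix (Fin (2 * (m + 1))) (Fin (2 * (m + 1))) R) :
    pfaffian B = ∑ b : Fin (2 * m + 1), (-1) ^ (b : ℕ) * B 0 b.succ *
      pfaffian (B.submatrix (fun k => (b.succAbove k).succ) (fun k => (b.succAbove k).succ)) := by
  rw [pfaffian_eq_sum_isSortedPairing, sum_perm_eq_sum_insertPair _ fun η hη => if_neg hη]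
  refine sum_congr rfl fun b _ => ?_
  rw [pfaffian_eq_sum_isSortedPairing, mul_sum]
  refine sum_congr rfl fun σ _ => ?_
  simp only [isSortedPairing_insertPair_iff, sign_insertPair, Fin.prod_univ_succ,
    pairIdx_zero_zero, pairIdx_zero_one, pairIdx_succ, insertPair_zero, insertPair_one,
    insertPair_succ_succ, Matrix.submatrix_apply, mul_ite, mul_zero]
  push_cast
  ring_nf

end Expansion

namespace Fin

lemma prod_ite_val_lt_neg_one {R : Type*} [CommRing R] {N : ℕ} (b : Fin (N + 1)) :
    ∏ t : Fin N, (if (t : ℕ) < b then (-1 : R) else 1) = (-1) ^ (b : ℕ) := by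
  rw [Finset.prod_ite, Finset.prod_const, Finset.prod_const_one, mul_one, card_filter_val_lt,
    min_eq_right (Nat.lt_succ_iff.mp b.2)]

lemma prod_erase_eq_prod_succAbove {M : Type*} [CommMonoid M] {N : ℕ} (b : Fin (N + 1))
    (g : Fin (N + 1) → M) : ∏ k ∈ univ.erase b, g k = ∏ t, g (b.succAbove t) := by
  rw [univ_succAbove N b, erase_cons, prod_map]
  rfl

lemma prod_pairs_lt_eq_succAbove {R : Type*} [CommRing R] {N : ℕ}
    (c : Fin (N + 1) → Fin (N + 1) → R) (hc : ∀ i j, c j i = -c i j) (b : Fin (N + 1)) :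
    ∏ i, ∏ j, (if i < j then c i j else 1) = (-1) ^ (b : ℕ) * (∏ t, c b (b.succAbove t)) *
      ∏ i : Fin N, ∏ j : Fin N, if i < j then c (b.succAbove i) (b.succAbove j) else 1 := by
  have hrest : ∀ t, ∏ j, (if b.succAbove t < j then c (b.succAbove t) j else 1) =
      (if b.succAbove t < b then c (b.succAbove t) b else 1) *
        ∏ s, if t < s then c (b.succAbove t) (b.succAbove s) else 1 := fun t => by
    simp only [prod_univ_succAbove _ b, (strictMono_succAbove b).lt_iff_lt]
  have hpair : ∀ t, (if b < b.succAbove t then c b (b.succAbove t) else 1) *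
      (if b.succAbove t < b then c (b.succAbove t) b else 1) =
        (if (t : ℕ) < b then -1 else 1) * c b (b.succAbove t) := fun t => by
    have hlt : b.succAbove t < b ↔ (t : ℕ) < b := by
      rw [succAbove_lt_iff_castSucc_lt, lt_def, val_castSucc]
    rcases (succAbove_ne b t).lt_or_gt with h | h
    · rw [if_neg h.not_gt, if_pos h, if_pos (hlt.mp h), hc b, one_mul, neg_one_mul]
    · rw [if_pos h, if_neg h.not_gt, if_neg (mt hlt.mpr h.not_gt), mul_one, one_mul]
  rw [prod_univ_succAbove _ b, prod_univ_succAbove _ b, if_neg (lt_irrefl b), one_mul,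
    prod_congr rfl fun t _ => hrest t, prod_mul_distrib, ← mul_assoc, ← prod_mul_distrib,
    prod_congr rfl fun t _ => hpair t, prod_mul_distrib, prod_ite_val_lt_neg_one]

end Fin

section Interpolation

open Polynomial Lagrange

variable {F : Type*} [Field F] {ι : Type*} [Fintype ι]

lemma natDegree_prod_one_sub_C_mul_X_le (z : ι → F) :
    (∏ k, (1 - C (z k) * X)).natDegree ≤ Fintype.card ι := by
  refine (natDegree_prod_le _ _).trans ?_
  have h1 : ∀ k ∈ univ, (1 - C (z k) * X).natDegree ≤ 1 := fun k _ => by compute_degree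
  simpa using Finset.sum_le_card_nsmul univ _ 1 h1

variable [DecidableEq ι] {z : ι → F}

theorem prod_one_sub_C_mul_X_eq [NeZero (2 : F)] (hz : Function.Injective z)
    (hz1 : ∀ k, z k ≠ 1) (hzm1 : ∀ k, z k ≠ -1) (hodd : Odd (Fintype.card ι)) :
    ∏ k, (1 - C (z k) * X) = (1 - X ^ 2) *
      interpolate univ z (fun j => ∏ k ∈ univ.erase j, (1 - z j * z k)) + X * nodal univ z := by
  -- the `N + 2` nodes `1`, `-1` and `z k`
  set v : Option (Option ι) → F := fun o => o.elim 1 fun o => o.elim (-1) z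
  have hv : Function.Injective v := by
    have h : (-1 : F) ≠ 1 := fun h => two_ne_zero (α := F) (by linear_combination -h)
    rintro (_ | _ | i) (_ | _ | j) hij <;> simp_all [v, hz.eq_iff, eq_comm]
  have hN : Fintype.card (Option (Option ι)) = Fintype.card ι + 1 + 1 := by simp
  have hpos : 0 < Fintype.card ι := hodd.pos
  have hlt : ∀ p : F[X], p.natDegree ≤ Fintype.card ι + 1 →
      p.degree < #(univ : Finset (Option (Option ι))) := fun p hp =>
    (degree_le_of_natDegree_le hp).trans_lt (by rw [card_univ, hN]; exact_mod_cast by omega)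
  refine eq_of_degrees_lt_of_eval_index_eq univ hv.injOn
    (hlt _ ((natDegree_prod_one_sub_C_mul_X_le z).trans (by omega))) (hlt _ ?_) ?_
  · have hG := natDegree_le_iff_degree_le.mpr
      (degree_interpolate_le (s := univ) (fun j => ∏ k ∈ univ.erase j, (1 - z j * z k))
        hz.injOn)
    have h2 : (1 - X ^ 2 : F[X]).natDegree ≤ 2 := by compute_degree
    refine (natDegree_add_le _ _).trans
      (max_le (natDegree_mul_le.trans ?_) (natDegree_mul_le.trans ?_))
    · rw [card_univ] at hG; omega
    · rw [natDegree_X, natDegree_nodal, card_univ]; omega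
  · rintro (_ | _ | i) -
    · simp [v, eval_prod, eval_nodal]
    · have h : ∀ k, -1 - z k = -(1 + z k) := fun k => by ring
      simp only [v, Option.elim, eval_add, eval_mul, eval_prod, eval_nodal, eval_sub, eval_one,
        eval_C, eval_X, eval_pow]
      rw [prod_congr rfl fun k _ => h k, prod_neg, card_univ, hodd.neg_one_pow]
      simp only [mul_neg_one, sub_neg_eq_add]
      ring
    · simp only [v, Option.elim]
      rw [eval_add, eval_mul, eval_mul, eval_interpolate_at_node _ hz.injOn (mem_univ i),
        eval_nodal_at_node (mem_univ i), eval_prod, ← mul_prod_erase univ _ (mem_univ i)]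
      simp [mul_comm (z _) (z i), sq]

theorem sum_prod_erase_div_eq_one [NeZero (2 : F)] (hz : Function.Injective z)
    (hz1 : ∀ k, z k ≠ 1) (hzm1 : ∀ k, z k ≠ -1) (hodd : Odd (Fintype.card ι)) :
    ∑ j, ∏ k ∈ univ.erase j, (1 - z j * z k) / (z j - z k) = 1 := by
  have h := congrArg (coeff · (Fintype.card ι + 1)) (prod_one_sub_C_mul_X_eq hz hz1 hzm1 hodd)
  set G := interpolate univ z fun j => ∏ k ∈ univ.erase j, (1 - z j * z k)
  have hB : (∏ k, (1 - C (z k) * X)).coeff (Fintype.card ι + 1) = 0 :=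
    coeff_eq_zero_of_natDegree_lt ((natDegree_prod_one_sub_C_mul_X_le z).trans_lt (by omega))
  have hG : G.coeff (Fintype.card ι + 1) = 0 := coeff_eq_zero_of_degree_lt
    ((degree_interpolate_lt _ hz.injOn).trans (by rw [card_univ]; exact_mod_cast by omega))
  have hG' : G.coeff (Fintype.card ι - 1) =
      ∑ j, ∏ k ∈ univ.erase j, (1 - z j * z k) / (z j - z k) := by
    rw [← card_univ, coeff_eq_sum hz.injOn (degree_interpolate_lt _ hz.injOn)]
    simp only [eval_interpolate_at_node _ hz.injOn (mem_univ _), prod_div_distrib]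
  have hA : (X * nodal univ z).coeff (Fintype.card ι + 1) = 1 := by
    rw [coeff_X_mul, ← card_univ, ← natDegree_nodal (v := z)]
    exact nodal_monic.coeff_natDegree
  have hN : Fintype.card ι + 1 = Fintype.card ι - 1 + 2 := by have := hodd.pos; omega
  rw [coeff_add, sub_mul, one_mul, coeff_sub, hB, hG, hA, hN, coeff_X_pow_mul, hG'] at h
  linear_combination h

theorem sum_prod_erase_div_mul_eq_prod [NeZero (2 : F)] (hz : Function.Injective z)
    (hz1 : ∀ k, z k ≠ 1) (hzm1 : ∀ k, z k ≠ -1) (hodd : Odd (Fintype.card ι)) {t : F}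
    (ht : ∀ k, t ≠ z k) :
    ∑ j, (∏ k ∈ univ.erase j, (1 - z j * z k) / (z j - z k)) * ((1 - t * z j) / (t - z j)) =
      ∏ k, (1 - t * z k) / (t - z k) := by
  have hA : ∏ k, (t - z k) ≠ 0 := prod_ne_zero_iff.mpr fun k _ => sub_ne_zero.mpr (ht k)
  have h := congrArg (eval t) (prod_one_sub_C_mul_X_eq hz hz1 hzm1 hodd)
  rw [eval_add, eval_mul, eval_interpolate_not_at_node _ fun i _ => ht i, eval_nodal] at h
  simp only [eval_prod, eval_sub, eval_one, eval_mul, eval_C, eval_X, eval_pow, eval_nodal,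
    mul_comm (z _) t] at h
  have hterm : ∀ j, (∏ k ∈ univ.erase j, (1 - z j * z k) / (z j - z k)) *
      ((1 - t * z j) / (t - z j)) =
        (1 - t ^ 2) *
            (nodalWeight univ z j * (t - z j)⁻¹ * ∏ k ∈ univ.erase j, (1 - z j * z k)) +
          t * ∏ k ∈ univ.erase j, (1 - z j * z k) / (z j - z k) := fun j => by
    have htj : t - z j ≠ 0 := sub_ne_zero.mpr (ht j)
    rw [nodalWeight, prod_inv_distrib, prod_div_distrib]
    field_simp
    ring
  rw [prod_div_distrib, eq_div_iff hA, sum_congr rfl fun j _ => hterm j, sum_add_distrib,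
    ← mul_sum, ← mul_sum, sum_prod_erase_div_eq_one hz hz1 hzm1 hodd]
  linear_combination -h

theorem sum_inv_prod_erase_mul_eq_prod [NeZero (2 : F)] (hz : Function.Injective z)
    (hz1 : ∀ k, z k ≠ 1) (hzm1 : ∀ k, z k ≠ -1) (hodd : Odd (Fintype.card ι)) {y : F}
    (hy : y ≠ 0) (hyz : ∀ k, 1 - y * z k ≠ 0) :
    ∑ j, (∏ k ∈ univ.erase j, (z j - z k) / (1 - z j * z k))⁻¹ *
      ((y - z j) / (1 - y * z j)) = ∏ k, (y - z k) / (1 - y * z k) := by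
  have hinv : ∀ a, (1 - y⁻¹ * a) / (y⁻¹ - a) = (y - a) / (1 - y * a) := fun a => by
    rw [← mul_div_mul_left _ _ hy, mul_sub, mul_sub, ← mul_assoc, mul_inv_cancel₀ hy, one_mul,
      mul_one]
  have ht : ∀ k, y⁻¹ ≠ z k := fun k h =>
    hyz k (by rw [← h, mul_inv_cancel₀ hy, sub_self])
  simp_rw [← prod_inv_distrib, inv_div]
  simpa only [hinv] using sum_prod_erase_div_mul_eq_prod hz hz1 hzm1 hodd ht

end Interpolation

theorem schur_pfaffian_of_injective_of_ne_zero {F : Type*} [Field F] [NeZero (2 : F)] (n : ℕ)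
    (x : Fin (2 * n) → F) (hinj : Function.Injective x) (hx0 : ∀ i, x i ≠ 0)
    (hx : ∀ i j, 1 - x i * x j ≠ 0) :
    pfaffian (Matrix.of fun i j => (x i - x j) / (1 - x i * x j))
      = ∏ i, ∏ j, if i < j then (x i - x j) / (1 - x i * x j) else 1 := by
  induction n with
  | zero => simp [pfaffian]
  | succ m ih =>
    have hskew : ∀ a b : F, (b - a) / (1 - b * a) = -((a - b) / (1 - a * b)) := fun a b => by
      rw [mul_comm, ← neg_sub, neg_div]
    set z : Fin (2 * m + 1) → F := fun t => x t.succ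
    have hz : Function.Injective z := hinj.comp (Fin.succ_injective _)
    -- the sign `(-1) ^ b` of the expansion cancels the one from removing `b` from `∏ i < j`
    have hminor : ∀ b : Fin (2 * m + 1),
        (-1) ^ (b : ℕ) * ((x 0 - z b) / (1 - x 0 * z b)) *
          pfaffian (Matrix.of fun i j => (z (b.succAbove i) - z (b.succAbove j)) /
            (1 - z (b.succAbove i) * z (b.succAbove j))) =
        (∏ i, ∏ j, if i < j then (z i - z j) / (1 - z i * z j) else 1) *
          ((∏ t, (z b - z (b.succAbove t)) / (1 - z b * z (b.succAbove t)))⁻¹ *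
            ((x 0 - z b) / (1 - x 0 * z b))) := fun b => by
      have hP : ∏ t, (z b - z (b.succAbove t)) / (1 - z b * z (b.succAbove t)) ≠ 0 :=
        prod_ne_zero_iff.mpr fun t _ =>
          div_ne_zero (sub_ne_zero.mpr (hz.ne (Fin.succAbove_ne b t).symm)) (hx _ _)
      rw [ih (fun t => z (b.succAbove t)) (hz.comp Fin.succAbove_right_injective) (fun _ => hx0 _)
        (fun _ _ => hx _ _), Fin.prod_pairs_lt_eq_succAbove _ (fun i j => hskew (z i) (z j)) b]
      field_simp
    have hpartial : ∑ b, (∏ t, (z b - z (b.succAbove t)) / (1 - z b * z (b.succAbove t)))⁻¹ *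
        ((x 0 - z b) / (1 - x 0 * z b)) = ∏ b, (x 0 - z b) / (1 - x 0 * z b) := by
      simpa only [Fin.prod_erase_eq_prod_succAbove] using sum_inv_prod_erase_mul_eq_prod hz
        (fun k h => hx k.succ k.succ (by simp [z, h]))
        (fun k h => hx k.succ k.succ (by simp [z, h]))
        (by simp) (hx0 0) (fun k => hx 0 k.succ)
    have hsplit := Fin.prod_pairs_lt_eq_succAbove (N := 2 * m + 1)
      (fun i j => (x i - x j) / (1 - x i * x j)) (fun i j => hskew (x i) (x j)) 0
    simp only [Fin.val_zero, pow_zero, one_mul, Fin.succAbove_zero] at hsplit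
    rw [pfaffian_succ]
    refine (sum_congr rfl fun b _ => hminor b).trans ?_
    rw [← mul_sum, hpartial, mul_comm]
    exact hsplit.symm

open Filter Topology

lemma continuous_prod_pairs_lt {R : Type*} [CommRing R] [TopologicalSpace R] [IsTopologicalRing R]
    {N : ℕ} :
    Continuous fun B : Matrix (Fin N) (Fin N) R => ∏ i, ∏ j, if i < j then B i j else 1 :=
  continuous_finsetProd _ fun i _ => continuous_finsetProd _ fun j _ => by
    split_ifs
    · fun_prop
    · exact continuous_const

lemma eventually_add_mul_ne_zero {K : Type*} [Field K] [TopologicalSpace K] [T1Space K]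
    (a : K) {b : K} (hb : b ≠ 0) : ∀ᶠ ε in 𝓝[≠] 0, a + ε * b ≠ 0 := by
  have hfin : {ε : K | a + ε * b = 0}.Finite := Set.Subsingleton.finite
    fun ε (hε : a + ε * b = 0) ε' (hε' : a + ε' * b = 0) =>
      mul_right_cancel₀ hb (by linear_combination hε - hε')
  exact hfin.eventually_cofinite_notMem.filter_mono (nhdsNE_le_cofinite 0)

lemma eventually_generic_perturbation {N : ℕ} (x : Fin N → ℝ)
    (hx : ∀ i j, 1 - x i * x j ≠ 0) :
    ∀ᶠ ε in 𝓝[≠] 0, Function.Injective (fun i => x i + ε * ((i : ℝ) + 1)) ∧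
      (∀ i, x i + ε * ((i : ℝ) + 1) ≠ 0) ∧
      ∀ i j, 1 - (x i + ε * ((i : ℝ) + 1)) * (x j + ε * ((j : ℝ) + 1)) ≠ 0 := by
  refine (eventually_all.mpr fun i => eventually_all.mpr fun j => ?_).and <|
    (eventually_all.mpr fun i => eventually_add_mul_ne_zero _ (by positivity)).and <|
    eventually_all.mpr fun i => eventually_all.mpr fun j =>
      Eventually.filter_mono nhdsWithin_le_nhds <| ContinuousAt.eventually_ne
        (g := fun ε => 1 - (x i + ε * ((i : ℝ) + 1)) * (x j + ε * ((j : ℝ) + 1)))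
        (by fun_prop) (by simpa using hx i j)
  by_cases hij : i = j
  · exact Eventually.of_forall fun _ _ => hij
  · have hslope : (i : ℝ) - j ≠ 0 :=
      sub_ne_zero.mpr (Nat.cast_injective.ne (Fin.val_injective.ne hij))
    exact (eventually_add_mul_ne_zero (x i - x j) hslope).mono fun ε h heq =>
      absurd (by linear_combination heq) h

/-- Schur's Pfaffian identity. -/
theorem schur_pfaffian (n : ℕ) (x : Fin (2 * n) → ℝ)
    (hx : ∀ i, x i ∈ Set.Ioo (-1 : ℝ) 1) :
    pfaffian (Matrix.of fun i j => (x i - x j) / (1 - x i * x j))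
      = ∏ i, ∏ j, if i < j then (x i - x j) / (1 - x i * x j) else 1 := by
  have hx1 : ∀ i j, 1 - x i * x j ≠ 0 := fun i j => by
    obtain ⟨hi₁, hi₂⟩ := hx i
    obtain ⟨hj₁, hj₂⟩ := hx j
    nlinarith
  set y : ℝ → Fin (2 * n) → ℝ := fun ε i => x i + ε * ((i : ℝ) + 1)
  have hy0 : y 0 = x := by ext; simp [y]
  have hM : ContinuousAt
      (fun ε => Matrix.of fun i j => (y ε i - y ε j) / (1 - y ε i * y ε j)) 0 :=
    continuousAt_pi.2 fun i => continuousAt_pi.2 fun j =>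
      ContinuousAt.div (by fun_prop) (by fun_prop) (by rw [hy0]; exact hx1 i j)
  have hgeneric := (eventually_generic_perturbation x hx1).mono fun ε ⟨hinj, hne, hε⟩ =>
    schur_pfaffian_of_injective_of_ne_zero n (y ε) hinj hne hε
  have h := tendsto_nhds_unique
    (((continuous_pfaffian.continuousAt.comp hM).tendsto.mono_left nhdsWithin_le_nhds).congr'
      hgeneric)
    ((continuous_prod_pairs_lt.continuousAt.comp hM).tendsto.mono_left nhdsWithin_le_nhds)
  simpa only [Function.comp_apply, hy0, Matrix.of_apply] using h
end

section
/- For s ≠ t in (-1,1), ∂/∂t arcsin c(s,t) = -sgn(t-s)·c(s,t)/(1-t²), where c(s,t) = √((1-s²)(1-t²))/(1-st). -/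
/-!
Since (1 - s t)² - (1 - s²)(1 - t²) = (s - t)², we get √(1 - c²) = |s - t| / (1 - s t), while
logarithmic differentiation gives ∂c/∂t = c (s - t) / ((1 - t²)(1 - s t)). Dividing the two, all
that remains of s - t is (s - t) / |s - t| = -sgn(t - s).
-/

open Real Set

theorem Real.div_abs_eq_sign (r : ℝ) : r / |r| = Real.sign r := by
  rcases lt_trichotomy r 0 with hr | rfl | hr
  · rw [abs_of_neg hr, sign_of_neg hr, div_neg, div_self hr.ne]
  · simp
  · rw [abs_of_pos hr, sign_of_pos hr, div_self hr.ne']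

theorem HasDerivAt.arcsin {f : ℝ → ℝ} {f' x : ℝ} (hf : HasDerivAt f f' x) (h₁ : f x ≠ -1)
    (h₂ : f x ≠ 1) : HasDerivAt (fun y => arcsin (f y)) (f' / √(1 - f x ^ 2)) x :=
  ((hasDerivAt_arcsin h₁ h₂).comp x hf).congr_deriv (one_div_mul_eq_div _ _)

noncomputable def c (s t : ℝ) : ℝ := √((1 - s ^ 2) * (1 - t ^ 2)) / (1 - s * t)

section

variable {s t : ℝ}

theorem one_sub_sq_pos (hs : s ∈ Ioo (-1 : ℝ) 1) : 0 < 1 - s ^ 2 := by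
  nlinarith [hs.1, hs.2]

theorem one_sub_mul_pos (hs : s ∈ Ioo (-1 : ℝ) 1) (ht : t ∈ Ioo (-1 : ℝ) 1) : 0 < 1 - s * t := by
  nlinarith [hs.1, hs.2, ht.1, ht.2]

theorem one_sub_c_sq (hs : s ∈ Ioo (-1 : ℝ) 1) (ht : t ∈ Ioo (-1 : ℝ) 1) :
    1 - c s t ^ 2 = ((s - t) / (1 - s * t)) ^ 2 := by
  have hden := (one_sub_mul_pos hs ht).ne'
  rw [c, div_pow, sq_sqrt (mul_pos (one_sub_sq_pos hs) (one_sub_sq_pos ht)).le]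
  field_simp
  ring

theorem abs_c_lt_one (hs : s ∈ Ioo (-1 : ℝ) 1) (ht : t ∈ Ioo (-1 : ℝ) 1) (hst : s ≠ t) :
    |c s t| < 1 := by
  rw [← sq_lt_one_iff_abs_lt_one]
  have : 0 < ((s - t) / (1 - s * t)) ^ 2 :=
    sq_pos_of_ne_zero (div_ne_zero (sub_ne_zero.2 hst) (one_sub_mul_pos hs ht).ne')
  linarith [one_sub_c_sq hs ht]

theorem sqrt_one_sub_c_sq (hs : s ∈ Ioo (-1 : ℝ) 1) (ht : t ∈ Ioo (-1 : ℝ) 1) :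
    √(1 - c s t ^ 2) = |s - t| / (1 - s * t) := by
  rw [one_sub_c_sq hs ht, sqrt_sq_eq_abs, abs_div, abs_of_pos (one_sub_mul_pos hs ht)]

theorem hasDerivAt_c (hs : s ∈ Ioo (-1 : ℝ) 1) (ht : t ∈ Ioo (-1 : ℝ) 1) :
    HasDerivAt (c s) (c s t * (s - t) / ((1 - t ^ 2) * (1 - s * t))) t := by
  have hprod := mul_pos (one_sub_sq_pos hs) (one_sub_sq_pos ht)
  have hden := (one_sub_mul_pos hs ht).ne'
  have hnum : HasDerivAt (fun u => (1 - s ^ 2) * (1 - u ^ 2)) ((1 - s ^ 2) * (-2 * t)) t := by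
    simpa using ((hasDerivAt_pow 2 t).const_sub 1).const_mul (1 - s ^ 2)
  have hlin : HasDerivAt (fun u => 1 - s * u) (-(s * 1)) t :=
    ((hasDerivAt_id t).const_mul s).const_sub 1
  refine ((hnum.sqrt hprod.ne').div hlin hden).congr_deriv ?_
  have hroot := sq_sqrt hprod.le
  have ht2 := (one_sub_sq_pos ht).ne'
  simp only [c]
  field_simp
  linear_combination (s * (1 - t ^ 2) - (s - t)) * hroot

end

/-- ∂/∂t arcsin c(s,t) = -sgn(t-s) c(s,t)/(1-t²) for s ≠ t in (-1,1), where
c(s,t) = √((1-s²)(1-t²))/(1-st). -/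
theorem deriv_arcsin_c (s t : ℝ)
    (hs : s ∈ Set.Ioo (-1 : ℝ) 1) (ht : t ∈ Set.Ioo (-1 : ℝ) 1) (hst : s ≠ t) :
    HasDerivAt (fun u : ℝ => Real.arcsin (Real.sqrt ((1 - s ^ 2) * (1 - u ^ 2)) / (1 - s * u)))
      (-(Real.sign (t - s)) * (Real.sqrt ((1 - s ^ 2) * (1 - t ^ 2)) / (1 - s * t))
        / (1 - t ^ 2)) t := by
  have hc := abs_lt.1 (abs_c_lt_one hs ht hst)
  refine ((hasDerivAt_c hs ht).arcsin hc.1.ne' hc.2.ne).congr_deriv ?_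
  have hden := (one_sub_mul_pos hs ht).ne'
  have ht2 := (one_sub_sq_pos ht).ne'
  calc c s t * (s - t) / ((1 - t ^ 2) * (1 - s * t)) / √(1 - c s t ^ 2)
      = (s - t) / |s - t| * c s t / (1 - t ^ 2) := by
        rw [sqrt_one_sub_c_sq hs ht]
        field_simp
    _ = -(Real.sign (t - s)) * c s t / (1 - t ^ 2) := by
        rw [Real.div_abs_eq_sign, ← Real.sign_neg, neg_sub]
end

section
/- For s ≠ t in (-1,1), ∂/∂t c(s,t) = -sgn(t-s)·|μ(s,t)|·c(s,t)/(1-t²), where c(s,t) = √((1-s²)(1-t²))/(1-st) and μ(s,t) = (s-t)/(1-st). -/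
/-!
Since `sign x * |x| = x`, the factor `-sgn(t - s) |μ(s,t)|` is just `μ(s,t)`, so the claim is
`∂c/∂t = μ c / (1 - t²)`. With `s = tanh a`, `t = tanh b` one has `c = sech (b - a)` and
`μ = tanh (a - b)`, so this is `sech' = -sech · tanh` divided by `dt/db = 1 - t²`; directly, it is
the quotient rule together with `√((1 - s²)(1 - t²))² = (1 - s²)(1 - t²)`.
-/

open Set

theorem Real.sign_mul_abs (x : ℝ) : Real.sign x * |x| = x := by
  rcases lt_trichotomy x 0 with h | rfl | h
  · rw [Real.sign_of_neg h, abs_of_neg h, neg_one_mul, neg_neg]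
  · simp
  · rw [Real.sign_of_pos h, abs_of_pos h, one_mul]

lemma neg_sign_sub_mul_abs_sub_div {s t d : ℝ} (hd : 0 < d) :
    -Real.sign (t - s) * |(s - t) / d| = (s - t) / d := by
  rw [← Real.sign_neg, neg_sub, abs_div, abs_of_pos hd, ← mul_div_assoc, Real.sign_mul_abs]

lemma one_sub_mul_pos_of_mem_Ioo {s t : ℝ} (hs : s ∈ Ioo (-1 : ℝ) 1) (ht : t ∈ Ioo (-1 : ℝ) 1) :
    0 < 1 - s * t := by
  obtain ⟨hs₁, hs₂⟩ := hs
  obtain ⟨ht₁, ht₂⟩ := ht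
  nlinarith

lemma one_sub_sq_pos_of_mem_Ioo {t : ℝ} (ht : t ∈ Ioo (-1 : ℝ) 1) : 0 < 1 - t ^ 2 := by
  rw [sq]
  exact one_sub_mul_pos_of_mem_Ioo ht ht

theorem hasDerivAt_sqrt_one_sub_sq_mul_div {s t : ℝ}
    (hs : s ∈ Ioo (-1 : ℝ) 1) (ht : t ∈ Ioo (-1 : ℝ) 1) :
    HasDerivAt (fun u : ℝ => √((1 - s ^ 2) * (1 - u ^ 2)) / (1 - s * u))
      ((s - t) / (1 - s * t) * (√((1 - s ^ 2) * (1 - t ^ 2)) / (1 - s * t)) / (1 - t ^ 2)) t := by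
  have hs' := one_sub_sq_pos_of_mem_Ioo hs
  have ht' := one_sub_sq_pos_of_mem_Ioo ht
  have hst := one_sub_mul_pos_of_mem_Ioo hs ht
  have hprod : 0 < (1 - s ^ 2) * (1 - t ^ 2) := mul_pos hs' ht'
  have hnum : HasDerivAt (fun u : ℝ => (1 - s ^ 2) * (1 - u ^ 2)) ((1 - s ^ 2) * -(2 * t)) t := by
    simpa using ((hasDerivAt_pow 2 t).const_sub 1).const_mul (1 - s ^ 2)
  have hden : HasDerivAt (fun u : ℝ => 1 - s * u) (-s) t := by
    simpa using ((hasDerivAt_id t).const_mul s).const_sub 1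
  have hquot : HasDerivAt (fun u : ℝ => √((1 - s ^ 2) * (1 - u ^ 2)) / (1 - s * u)) _ t :=
    (hnum.sqrt hprod.ne').div hden hst.ne'
  convert hquot using 1
  have hsq : √((1 - s ^ 2) * (1 - t ^ 2)) ^ 2 = (1 - s ^ 2) * (1 - t ^ 2) := Real.sq_sqrt hprod.le
  field_simp
  linear_combination ((s - t) - s * (1 - t ^ 2)) * hsq

theorem deriv_c_general (s t : ℝ)
    (hs : s ∈ Set.Ioo (-1 : ℝ) 1) (ht : t ∈ Set.Ioo (-1 : ℝ) 1) :
    HasDerivAt (fun u : ℝ => Real.sqrt ((1 - s ^ 2) * (1 - u ^ 2)) / (1 - s * u))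
      (-(Real.sign (t - s)) * |(s - t) / (1 - s * t)|
        * (Real.sqrt ((1 - s ^ 2) * (1 - t ^ 2)) / (1 - s * t)) / (1 - t ^ 2)) t := by
  rw [neg_sign_sub_mul_abs_sub_div (one_sub_mul_pos_of_mem_Ioo hs ht)]
  exact hasDerivAt_sqrt_one_sub_sq_mul_div hs ht

/-- ∂/∂t c(s,t) = -sgn(t-s) |μ(s,t)| c(s,t)/(1-t²) for s ≠ t in (-1,1), where
c(s,t) = √((1-s²)(1-t²))/(1-st) and μ(s,t) = (s-t)/(1-st). -/
theorem deriv_c (s t : ℝ)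
    (hs : s ∈ Set.Ioo (-1 : ℝ) 1) (ht : t ∈ Set.Ioo (-1 : ℝ) 1) (hst : s ≠ t) :
    HasDerivAt (fun u : ℝ => Real.sqrt ((1 - s ^ 2) * (1 - u ^ 2)) / (1 - s * u))
      (-(Real.sign (t - s)) * |(s - t) / (1 - s * t)|
        * (Real.sqrt ((1 - s ^ 2) * (1 - t ^ 2)) / (1 - s * t)) / (1 - t ^ 2)) t :=
  deriv_c_general s t hs ht
end

section
/- For fixed s ∈ (-1,1), the function g(s,t) = c(s,t)² arcsin c(s,t) - μ(s,t)² arcsin c(s,t) + c(s,t)|μ(s,t)| is nonnegative for all t ∈ (-1,1). -/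
open Real

/-- Key 1D lemma: for x ∈ [0,1], (2x²-1) arcsin x + x√(1-x²) ≥ 0. -/
lemma key_ineq {x : ℝ} (hx0 : 0 ≤ x) (hx1 : x ≤ 1) :
    0 ≤ (2 * x ^ 2 - 1) * Real.arcsin x + x * Real.sqrt (1 - x ^ 2) := by
  have harcsin0 : 0 ≤ Real.arcsin x := Real.arcsin_nonneg.mpr hx0
  have hsq : 0 ≤ Real.sqrt (1 - x ^ 2) := Real.sqrt_nonneg _
  rcases le_or_gt 1 (2 * x ^ 2) with h | h
  · have : 0 ≤ 2 * x ^ 2 - 1 := by linarith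
    positivity
  · -- here x < 1/√2 < 1
    have hxlt1 : x < 1 := by nlinarith
    have h1x2 : 0 < 1 - x ^ 2 := by nlinarith
    have hsqpos : 0 < Real.sqrt (1 - x ^ 2) := Real.sqrt_pos.mpr h1x2
    have harcle : Real.arcsin x ≤ x / Real.sqrt (1 - x ^ 2) := by
      rcases eq_or_lt_of_le hx0 with h0 | h0
      · simp [← h0]
      · have ha0 : 0 < Real.arcsin x := Real.arcsin_pos.mpr h0
        have ha2 : Real.arcsin x < π / 2 := Real.arcsin_lt_pi_div_two.mpr hxlt1
        have := Real.lt_tan ha0 ha2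
        rw [Real.tan_arcsin] at this
        exact this.le
    have hkey : (1 - 2 * x ^ 2) * Real.arcsin x ≤ x * Real.sqrt (1 - x ^ 2) := by
      calc (1 - 2 * x ^ 2) * Real.arcsin x
          ≤ (1 - 2 * x ^ 2) * (x / Real.sqrt (1 - x ^ 2)) := by
            apply mul_le_mul_of_nonneg_left harcle (by linarith)
        _ ≤ (1 - x ^ 2) * (x / Real.sqrt (1 - x ^ 2)) := by
            apply mul_le_mul_of_nonneg_right (by nlinarith)
            positivity
        _ = x * Real.sqrt (1 - x ^ 2) := by
            field_simp
            nlinarith [Real.sq_sqrt h1x2.le]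
    linarith

/-- g(s,t) = c² arcsin c - μ² arcsin c + c|μ| ≥ 0 for all s,t ∈ (-1,1), where
c = c(s,t) = √((1-s²)(1-t²))/(1-st) and μ = μ(s,t) = (s-t)/(1-st). -/
theorem g_nonneg (s : ℝ) (hs : s ∈ Set.Ioo (-1 : ℝ) 1)
    (t : ℝ) (ht : t ∈ Set.Ioo (-1 : ℝ) 1) :
    0 ≤ (Real.sqrt ((1 - s ^ 2) * (1 - t ^ 2)) / (1 - s * t)) ^ 2
          * Real.arcsin (Real.sqrt ((1 - s ^ 2) * (1 - t ^ 2)) / (1 - s * t))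
        - ((s - t) / (1 - s * t)) ^ 2
          * Real.arcsin (Real.sqrt ((1 - s ^ 2) * (1 - t ^ 2)) / (1 - s * t))
        + (Real.sqrt ((1 - s ^ 2) * (1 - t ^ 2)) / (1 - s * t)) * |(s - t) / (1 - s * t)| := by
  obtain ⟨hs1, hs2⟩ := hs
  obtain ⟨ht1, ht2⟩ := ht
  have hst : 0 < 1 - s * t := by nlinarith
  have hA : 0 ≤ (1 - s ^ 2) * (1 - t ^ 2) := mul_nonneg (by nlinarith) (by nlinarith)
  set c : ℝ := Real.sqrt ((1 - s ^ 2) * (1 - t ^ 2)) / (1 - s * t) with hc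
  set μ : ℝ := (s - t) / (1 - s * t) with hμ
  have hc0 : 0 ≤ c := div_nonneg (Real.sqrt_nonneg _) hst.le
  have hcsq : c ^ 2 = (1 - s ^ 2) * (1 - t ^ 2) / (1 - s * t) ^ 2 := by
    rw [hc, div_pow, Real.sq_sqrt hA]
  have hsum : c ^ 2 + μ ^ 2 = 1 := by
    rw [hcsq, hμ, div_pow]
    field_simp
    ring
  have hc1 : c ≤ 1 := by nlinarith
  have hμ2 : μ ^ 2 = 1 - c ^ 2 := by linarith
  have habs : |μ| = Real.sqrt (1 - c ^ 2) := by
    rw [← hμ2, Real.sqrt_sq_eq_abs]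
  have := key_ineq hc0 hc1
  rw [habs, hμ2]
  nlinarith [this]
end

section
/- For z, w in the open unit disc with Im z > 0 and Im w > 0, the 2-point correlation of complex zeros satisfies ρ₂ᶜ(z,w) < ρ₁ᶜ(z)ρ₁ᶜ(w), where ρ₁ᶜ(z) = |z-z̄|/(π|1-z²|(1-|z|²)²) and ρ₂ᶜ(z,w) = ρ₁ᶜ(z)ρ₁ᶜ(w) + (π²|1-z²||1-w²|)⁻¹ (|(z-w)/(1-zw)|² - |(z-w̄)/(1-zw̄)|²). -/
open Complex

/-- The 1-point correlation function of complex zeros: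
ρ₁ᶜ(z) = |z - z̄| / (π |1-z²| (1-|z|²)²). -/
noncomputable def rho1c (z : ℂ) : ℝ :=
  ‖z - (starRingEnd ℂ) z‖
    / (Real.pi * ‖1 - z ^ 2‖ * (1 - ‖z‖ ^ 2) ^ 2)

/-- The 2-point correlation function of complex zeros. -/
noncomputable def rho2c (z w : ℂ) : ℝ :=
  rho1c z * rho1c w
    + (Real.pi ^ 2 * ‖1 - z ^ 2‖ * ‖1 - w ^ 2‖)⁻¹
      * (‖(z - w) / (1 - z * w)‖ ^ 2
          - ‖(z - (starRingEnd ℂ) w) / (1 - z * (starRingEnd ℂ) w)‖ ^ 2)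

/-!
With `c = (1 - |z|²)(1 - |w|²) > 0`, the identity `|1 - z w̄|² = |z - w|² + c` turns the two
squared pseudo-hyperbolic quantities in `ρ₂ᶜ` into `a / (b + c)` and `b / (a + c)`, where
`a = |z - w|²` and `b = |z - w̄|²`. Since `z` and `w` lie in the same half-plane, `a < b`, so the
correction term of `ρ₂ᶜ` is a positive factor times a negative number.
-/

open ComplexConjugate

theorem one_sub_ne_zero_of_norm_lt_one {R : Type*} [NormedRing R] [NormOneClass R] {x : R}
    (hx : ‖x‖ < 1) : 1 - x ≠ 0 :=
  sub_ne_zero.2 fun h => by simp [← h] at hx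

theorem div_add_lt_div_add_of_lt {K : Type*} [Field K] [LinearOrder K] [IsStrictOrderedRing K]
    {a b c : K} (ha : 0 ≤ a) (hab : a < b) (hc : 0 < c) :
    a / (b + c) < b / (a + c) := by
  rw [div_lt_div_iff₀ (by linarith) (by linarith)]
  nlinarith

namespace Complex

theorem normSq_one_sub_mul_conj (z w : ℂ) :
    normSq (1 - z * conj w) = normSq (z - w) + (1 - normSq z) * (1 - normSq w) := by
  simp only [normSq_apply, sub_re, sub_im, mul_re, mul_im, one_re, one_im, conj_re, conj_im]
  ring

theorem normSq_sub_lt_normSq_sub_conj {z w : ℂ} (hzw : 0 < z.im * w.im) :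
    normSq (z - w) < normSq (z - conj w) := by
  simp only [normSq_apply, sub_re, sub_im, conj_re, conj_im]
  nlinarith

theorem norm_sub_div_one_sub_mul_lt {z w : ℂ} (hz : ‖z‖ < 1) (hw : ‖w‖ < 1)
    (hzw : 0 < z.im * w.im) :
    ‖(z - w) / (1 - z * w)‖ < ‖(z - conj w) / (1 - z * conj w)‖ := by
  have hc : 0 < (1 - normSq z) * (1 - normSq w) := by
    rw [← Complex.sq_norm, ← Complex.sq_norm]
    exact mul_pos (by nlinarith [norm_nonneg z]) (by nlinarith [norm_nonneg w])
  have h := normSq_one_sub_mul_conj z (conj w)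
  rw [conj_conj, normSq_conj] at h
  rw [← sq_lt_sq₀ (norm_nonneg _) (norm_nonneg _), Complex.sq_norm, Complex.sq_norm,
    normSq_div, normSq_div, h, normSq_one_sub_mul_conj]
  exact div_add_lt_div_add_of_lt (normSq_nonneg _) (normSq_sub_lt_normSq_sub_conj hzw) hc

end Complex

/-- Negative correlation of complex zeros: ρ₂ᶜ(z,w) < ρ₁ᶜ(z) ρ₁ᶜ(w) for z, w in
the upper half of the open unit disc. -/
theorem complex_zeros_negatively_correlated (z w : ℂ)
    (hz : ‖z‖ < 1 ∧ 0 < z.im) (hw : ‖w‖ < 1 ∧ 0 < w.im) :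
    rho2c z w < rho1c z * rho1c w := by
  have hz2 : (1 : ℂ) - z ^ 2 ≠ 0 := one_sub_ne_zero_of_norm_lt_one <| by
    rw [norm_pow]; exact pow_lt_one₀ (norm_nonneg z) hz.1 two_ne_zero
  have hw2 : (1 : ℂ) - w ^ 2 ≠ 0 := one_sub_ne_zero_of_norm_lt_one <| by
    rw [norm_pow]; exact pow_lt_one₀ (norm_nonneg w) hw.1 two_ne_zero
  have hprefactor : 0 < (Real.pi ^ 2 * ‖1 - z ^ 2‖ * ‖1 - w ^ 2‖)⁻¹ := by
    have := Real.pi_pos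
    have := norm_pos_iff.2 hz2
    have := norm_pos_iff.2 hw2
    positivity
  have hdist := norm_sub_div_one_sub_mul_lt hz.1 hw.1 (mul_pos hz.2 hw.2)
  have hcorr := mul_neg_of_pos_of_neg hprefactor <|
    sub_neg.2 (pow_lt_pow_left₀ hdist (norm_nonneg _) two_ne_zero)
  rw [rho2c]
  linarith
end
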